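/- Let H be a finite Borel measure on Δ_{d-1} with ∫ w_j H(dw) = 1 for all j, and l(x) = ∫ max_j (w_j x_j) H(dw). For each j and each x ∈ [0,∞)^d, the right-hand partial derivative of l in the j-th coordinate at x exists and equals ∫_{Δ_{d-1}} w_j 1{ w_j x_j ≥ max_{s≠j} w_s x_s } H(dw), i.e. (l(x + h e_j) − l(x))/h converges to this integral as h ↓ 0. -/

import Mathlib

/-! Raising `x_j` by `h ≥ 0` changes only the `j`-th term of the maximum, and since `w_j ≥ 0` on
the simplex, `max_s w_s (x + h e_j)_s = max M (w_j x_j + w_j h)` with `M = max_s w_s x_s ≥ w_j x_j`.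
The right derivative of `h ↦ max M (B + c h)` at `0` is `c` when `M ≤ B` and `0` otherwise, and
its difference quotients are bounded by `c = w_j ≤ 1`, so dominated convergence applies. -/

open MeasureTheory

def unitSimplex (d : ℕ) : Set (Fin d → ℝ) :=
  {w | (∀ j, 0 ≤ w j ∧ w j ≤ 1) ∧ ∑ j, w j = 1}

/-- The stable tail dependence function associated to a spectral measure `H`. -/
noncomputable def stdf {d : ℕ} (H : Measure (Fin d → ℝ)) (x : Fin d → ℝ) : ℝ :=
  ∫ w, (⨆ j, w j * x j) ∂H

open Filter Set Topology

theorem MeasureTheory.Integrable.iSup {α ι : Type*} [MeasurableSpace α] {μ : Measure α}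
    [Fintype ι] [Nonempty ι] {f : ι → α → ℝ} (hf : ∀ i, Integrable (f i) μ) :
    Integrable (fun a => ⨆ i, f i a) μ := by
  refine (integrable_finsetSum Finset.univ fun i _ => (hf i).abs).mono'
    (AEMeasurable.iSup fun i => (hf i).aemeasurable).aestronglyMeasurable
    (Eventually.of_forall fun a => ?_)
  obtain ⟨i₀⟩ := ‹Nonempty ι›
  have hle : ∀ i, |f i a| ≤ ∑ i, |f i a| := fun i =>
    Finset.single_le_sum (f := fun i => |f i a|) (fun _ _ => abs_nonneg _) (Finset.mem_univ i)
  rw [Real.norm_eq_abs, abs_le]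
  refine ⟨?_, ciSup_le fun i => (le_abs_self _).trans (hle i)⟩
  calc -∑ i, |f i a| ≤ f i₀ a := neg_le_of_abs_le (hle i₀)
    _ ≤ ⨆ i, f i a := le_ciSup (Finite.bddAbove_range fun i => f i a) i₀

theorem integrable_apply_of_ae_mem_unitSimplex {d : ℕ} {H : Measure (Fin d → ℝ)}
    [IsFiniteMeasure H] (hH : ∀ᵐ w ∂H, w ∈ unitSimplex d) (s : Fin d) :
    Integrable (fun w => w s) H := by
  refine Integrable.of_bound (continuous_apply s).aestronglyMeasurable 1 ?_
  filter_upwards [hH] with w hw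
  rw [Real.norm_eq_abs, abs_le]
  exact ⟨by linarith [(hw.1 s).1], (hw.1 s).2⟩

theorem tendsto_max_add_mul_sub_div (M B : ℝ) {c : ℝ} (hc : 0 ≤ c) :
    Tendsto (fun h => (max M (B + c * h) - max M B) / h) (𝓝[>] 0)
      (𝓝 (if M ≤ B then c else 0)) := by
  split_ifs with hMB
  · refine tendsto_const_nhds.congr' ?_
    filter_upwards [self_mem_nhdsWithin] with h (hh : 0 < h)
    rw [max_eq_right hMB, max_eq_right (by nlinarith)]
    field_simp
    ring
  · have hlt : ∀ᶠ h in 𝓝[>] (0 : ℝ), B + c * h < M := by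
      refine nhdsWithin_le_nhds (((continuous_const.add
        (continuous_const.mul continuous_id)).tendsto' 0 B (by simp)).eventually
        (gt_mem_nhds (not_le.mp hMB)))
    refine tendsto_const_nhds.congr' ?_
    filter_upwards [hlt] with h hh
    rw [max_eq_left hh.le, max_eq_left (not_le.mp hMB).le, sub_self, zero_div]

theorem abs_max_add_mul_sub_le (M B : ℝ) {c h : ℝ} (hc : 0 ≤ c) (hh : 0 ≤ h) :
    |max M (B + c * h) - max M B| ≤ c * h := by
  rw [max_comm M, max_comm M]
  calc _ ≤ |B + c * h - B| := abs_max_sub_max_le_abs _ _ _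
    _ = c * h := by rw [add_sub_cancel_left, abs_of_nonneg (mul_nonneg hc hh)]

section SupOfProducts

variable {ι : Type*} [Finite ι] [DecidableEq ι] (w x : ι → ℝ) {j : ι}

theorem iSup_mul_add_smul_single {h : ℝ} (hwj : 0 ≤ w j) (hh : 0 ≤ h) :
    ⨆ s, w s * (x + h • (Pi.single j 1 : ι → ℝ)) s =
      max (⨆ s, w s * x s) (w j * x j + w j * h) := by
  have : Nonempty ι := ⟨j⟩
  have hterm : ∀ s, w s * (x + h • (Pi.single j 1 : ι → ℝ)) s =
      w s * x s + if s = j then w j * h else 0 := by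
    intro s
    by_cases hs : s = j
    · subst hs; simp [mul_add, mul_comm]
    · simp [hs]
  simp only [hterm]
  refine le_antisymm (ciSup_le fun s => ?_) (max_le (ciSup_le fun s => ?_) ?_)
  · by_cases hs : s = j
    · subst hs; simp
    · simpa [hs] using
        le_max_of_le_left (le_ciSup (Finite.bddAbove_range fun s => w s * x s) s)
  · refine le_trans ?_ (le_ciSup (Finite.bddAbove_range _) s)
    split_ifs <;> nlinarith
  · simpa using
      le_ciSup (Finite.bddAbove_range fun s => w s * x s + if s = j then w j * h else 0) j

theorem tendsto_iSup_mul_add_smul_single_sub_div (hwj : 0 ≤ w j) :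
    Tendsto (fun h => ((⨆ s, w s * (x + h • (Pi.single j 1 : ι → ℝ)) s) - ⨆ s, w s * x s) / h)
      (𝓝[>] 0) (𝓝 ({w | ∀ s, s ≠ j → w s * x s ≤ w j * x j}.indicator (fun w => w j) w)) := by
  have : Nonempty ι := ⟨j⟩
  set M := ⨆ s, w s * x s
  have hM : max M (w j * x j) = M :=
    max_eq_left (le_ciSup (Finite.bddAbove_range fun s => w s * x s) j)
  have hlimit : (if M ≤ w j * x j then w j else 0) =
      {w | ∀ s, s ≠ j → w s * x s ≤ w j * x j}.indicator (fun w => w j) w := by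
    by_cases hMB : M ≤ w j * x j
    · rw [if_pos hMB, indicator_of_mem]
      exact fun s _ => (le_ciSup (Finite.bddAbove_range fun s => w s * x s) s).trans hMB
    · rw [if_neg hMB, indicator_of_notMem]
      exact fun hS =>
        hMB (ciSup_le fun s => (eq_or_ne s j).elim (fun hs => hs ▸ le_rfl) (hS s))
  rw [← hlimit]
  refine (tendsto_max_add_mul_sub_div M (w j * x j) hwj).congr' ?_
  filter_upwards [self_mem_nhdsWithin] with h (hh : 0 < h)
  rw [iSup_mul_add_smul_single w x hwj hh.le, hM]

theorem abs_iSup_mul_add_smul_single_sub_div_le {h : ℝ} (hwj : 0 ≤ w j) (hh : 0 < h) :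
    |((⨆ s, w s * (x + h • (Pi.single j 1 : ι → ℝ)) s) - ⨆ s, w s * x s) / h| ≤ w j := by
  have : Nonempty ι := ⟨j⟩
  have hM : max (⨆ s, w s * x s) (w j * x j) = ⨆ s, w s * x s :=
    max_eq_left (le_ciSup (Finite.bddAbove_range fun s => w s * x s) j)
  have := abs_max_add_mul_sub_le (⨆ s, w s * x s) (w j * x j) hwj hh.le
  rw [hM] at this
  rwa [iSup_mul_add_smul_single w x hwj hh.le, abs_div, abs_of_pos hh, div_le_iff₀ hh]

end SupOfProducts

theorem stmt_5_general (d : ℕ) (H : Measure (Fin d → ℝ)) [IsFiniteMeasure H]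
    (hsupp : H (unitSimplex d)ᶜ = 0)
    (x : Fin d → ℝ) (j : Fin d) :
    Filter.Tendsto
      (fun h : ℝ => (stdf H (x + h • (Pi.single j 1 : Fin d → ℝ)) - stdf H x) / h)
      (nhdsWithin 0 (Set.Ioi 0))
      (nhds (∫ w,
        Set.indicator {w : Fin d → ℝ | ∀ s, s ≠ j → w s * x s ≤ w j * x j}
          (fun w => w j) w ∂H)) := by
  have : Nonempty (Fin d) := ⟨j⟩
  have hsimplex : ∀ᵐ w ∂H, w ∈ unitSimplex d := ae_iff.mpr hsupp
  have hint (y : Fin d → ℝ) : Integrable (fun w => ⨆ s, w s * y s) H :=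
    Integrable.iSup fun s => (integrable_apply_of_ae_mem_unitSimplex hsimplex s).mul_const (y s)
  set q : ℝ → (Fin d → ℝ) → ℝ :=
    fun h w => ((⨆ s, w s * (x + h • (Pi.single j 1 : Fin d → ℝ)) s) - ⨆ s, w s * x s) / h
  have hbound : ∀ᶠ h in 𝓝[>] (0 : ℝ), ∀ᵐ w ∂H, ‖q h w‖ ≤ 1 := by
    filter_upwards [self_mem_nhdsWithin] with h (hh : 0 < h)
    filter_upwards [hsimplex] with w hw
    rw [Real.norm_eq_abs]
    exact (abs_iSup_mul_add_smul_single_sub_div_le w x (hw.1 j).1 hh).trans (hw.1 j).2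
  have hlim : ∀ᵐ w ∂H, Tendsto (fun h => q h w) (𝓝[>] 0)
      (𝓝 ({w | ∀ s, s ≠ j → w s * x s ≤ w j * x j}.indicator (fun w => w j) w)) := by
    filter_upwards [hsimplex] with w hw
    exact tendsto_iSup_mul_add_smul_single_sub_div w x (hw.1 j).1
  have hDCT := tendsto_integral_filter_of_dominated_convergence (F := q) _
    (Eventually.of_forall fun h => (((hint _).sub (hint x)).div_const h).aestronglyMeasurable)
    hbound (integrable_const 1) hlim
  refine hDCT.congr fun h => ?_
  rw [stdf, stdf, ← integral_sub (hint _) (hint x), ← integral_div]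

theorem stmt_5 (d : ℕ) (hd : 1 ≤ d) (H : Measure (Fin d → ℝ)) [IsFiniteMeasure H]
    (hsupp : H (unitSimplex d)ᶜ = 0)
    (hmom : ∀ j : Fin d, ∫ w, w j ∂H = 1)
    (x : Fin d → ℝ) (hx : ∀ j, 0 ≤ x j) (j : Fin d) :
    Filter.Tendsto
      (fun h : ℝ => (stdf H (x + h • (Pi.single j 1 : Fin d → ℝ)) - stdf H x) / h)
      (nhdsWithin 0 (Set.Ioi 0))
      (nhds (∫ w,
        Set.indicator {w : Fin d → ℝ | ∀ s, s ≠ j → w s * x s ≤ w j * x j}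
          (fun w => w j) w ∂H)) :=
  stmt_5_general d H hsupp x j
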